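/- Let (𝒴, 𝒜) be a measurable space, Θ a nonempty set, U : Θ → ℝ, m : Θ → ℝⁿ, and for each θ ∈ Θ let P_{m(θ)} be a probability measure on (𝒴, 𝒜) that depends on θ only through m(θ). Suppose: (PI) there is a nonempty open set S ⊆ ℝⁿ such that for every μ ∈ S there exist θ⁻, θ⁺ ∈ Θ with m(θ⁻) = m(θ⁺) = μ and U(θ⁻) < 0 < U(θ⁺); (A1) the family {P_{m(θ)} : θ ∈ m⁻¹(S)} is boundedly complete, i.e., every bounded measurable f : 𝒴 → ℝ with ∫ f dP_{m(θ)} = 0 for all θ ∈ m⁻¹(S) satisfies f = 0 P_{m(θ)}-almost everywhere for every θ ∈ m⁻¹(S); (A2) every set E ∈ 𝒜 with P_{m(θ)}(E) = 0 for all θ ∈ m⁻¹(S) also satisfies P_{m(θ)}(E) = 0 for all θ ∈ Θ. Then every decision rule d : 𝒴 → [0,1] is welfare-admissible: there is no measurable d′ : 𝒴 → [0,1] with U(θ)·∫ d′ dP_{m(θ)} ≥ U(θ)·∫ d dP_{m(θ)} for all θ ∈ Θ and strict inequality for some θ ∈ Θ. -/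

import Mathlib

/-!
On every reduced-form parameter `μ ∈ S` welfare changes sign, so a rule that weakly dominates
`d` must have the same acceptance probability as `d` at every `μ ∈ S`. Bounded completeness turns
this into `d' = d` almost surely under each `P μ` with `μ ∈ S`, and (A2) spreads the null set
`{d' ≠ d}` to the whole model. Hence `d'` and `d` have equal welfare everywhere, and `d'` cannot
improve strictly anywhere.
-/

open MeasureTheory Set

section DecisionRule

variable {Y : Type*} [MeasurableSpace Y]

def IsDecisionRule (d : Y → ℝ) : Prop :=
  Measurable d ∧ ∀ y, d y ∈ Icc (0 : ℝ) 1

theorem IsDecisionRule.integrable {d : Y → ℝ} (hd : IsDecisionRule d) {μ : Measure Y}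
    [IsFiniteMeasure μ] : Integrable d μ :=
  .of_bound hd.1.aestronglyMeasurable 1 <| ae_of_all _ fun y => by
    rw [Real.norm_of_nonneg (hd.2 y).1]
    exact (hd.2 y).2

theorem IsDecisionRule.abs_sub_le_one {d d' : Y → ℝ} (hd : IsDecisionRule d)
    (hd' : IsDecisionRule d') (y : Y) : |d y - d' y| ≤ 1 :=
  abs_sub_le_of_nonneg_of_le (hd.2 y).1 (hd.2 y).2 (hd'.2 y).1 (hd'.2 y).2

end DecisionRule

section Completeness

variable {Y ι : Type*} [MeasurableSpace Y]

def BoundedlyCompleteOn (Q : ι → Measure Y) (T : Set ι) : Prop :=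
  ∀ f : Y → ℝ, Measurable f → (∃ C : ℝ, ∀ y, |f y| ≤ C) →
    (∀ i ∈ T, ∫ y, f y ∂Q i = 0) → ∀ i ∈ T, f =ᵐ[Q i] 0

theorem BoundedlyCompleteOn.ae_eq_zero_of_integral_eq_zero {Q : ι → Measure Y} {T : Set ι}
    (hQ : BoundedlyCompleteOn Q T)
    (hnull : ∀ E : Set Y, MeasurableSet E → (∀ i ∈ T, Q i E = 0) → ∀ i, Q i E = 0)
    {f : Y → ℝ} (hf : Measurable f) (hbdd : ∃ C : ℝ, ∀ y, |f y| ≤ C)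
    (h0 : ∀ i ∈ T, ∫ y, f y ∂Q i = 0) (i : ι) : f =ᵐ[Q i] 0 :=
  ae_iff.2 <| hnull {y | f y ≠ 0} (hf (measurableSet_singleton 0).compl)
    (fun j hj => ae_iff.1 (hQ f hf hbdd h0 j hj)) i

end Completeness

theorem eqOn_of_forall_mul_le_mul {Θ M R : Type*} [Ring R] [LinearOrder R] [IsStrictOrderedRing R]
    {U : Θ → R} {m : Θ → M} {S : Set M}
    (hPI : ∀ μ ∈ S, (∃ θ, m θ = μ ∧ U θ < 0) ∧ (∃ θ, m θ = μ ∧ 0 < U θ))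
    {v w : M → R} (h : ∀ θ, U θ * v (m θ) ≤ U θ * w (m θ)) : EqOn v w S := by
  intro μ hμ
  obtain ⟨⟨θneg, rfl, hneg⟩, ⟨θpos, hpos_eq, hpos⟩⟩ := hPI μ hμ
  have hle : v (m θneg) ≤ w (m θneg) := by
    have := h θpos
    rw [hpos_eq] at this
    exact le_of_mul_le_mul_left this hpos
  exact le_antisymm hle ((mul_le_mul_left_of_neg hneg).1 (h θneg))

theorem general_admissibility_general
    (n : ℕ) (Y : Type*) [MeasurableSpace Y] (Θ : Type*)
    (U : Θ → ℝ) (m : Θ → Fin n → ℝ)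
    (P : (Fin n → ℝ) → Measure Y) (hP : ∀ θ : Θ, IsProbabilityMeasure (P (m θ)))
    (S : Set (Fin n → ℝ))
    -- (PI): nontrivial partial identification on `S`
    (hPI : ∀ μ ∈ S, (∃ θ, m θ = μ ∧ U θ < 0) ∧ (∃ θ, m θ = μ ∧ 0 < U θ))
    -- (A1): bounded completeness of the subfamily indexed by `m⁻¹(S)`
    (hBC : ∀ f : Y → ℝ, Measurable f → (∃ C : ℝ, ∀ y, |f y| ≤ C) →
      (∀ θ : Θ, m θ ∈ S → ∫ y, f y ∂ P (m θ) = 0) →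
      ∀ θ : Θ, m θ ∈ S → f =ᵐ[P (m θ)] 0)
    -- (A2): common null sets extend from the subfamily to the whole family
    (hAC : ∀ E : Set Y, MeasurableSet E →
      (∀ θ : Θ, m θ ∈ S → P (m θ) E = 0) → ∀ θ : Θ, P (m θ) E = 0)
    (d : Y → ℝ) (hd : Measurable d ∧ ∀ y, d y ∈ Set.Icc (0 : ℝ) 1) :
    ¬ ∃ d' : Y → ℝ, (Measurable d' ∧ ∀ y, d' y ∈ Set.Icc (0 : ℝ) 1) ∧
      (∀ θ : Θ, U θ * ∫ y, d y ∂ P (m θ) ≤ U θ * ∫ y, d' y ∂ P (m θ)) ∧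
      (∃ θ : Θ, U θ * ∫ y, d y ∂ P (m θ) < U θ * ∫ y, d' y ∂ P (m θ)) := by
  rintro ⟨d', hd' : IsDecisionRule d', hweak, θ₀, hstrict⟩
  have hd : IsDecisionRule d := hd
  have hint : ∀ θ {g : Y → ℝ}, IsDecisionRule g → Integrable g (P (m θ)) := fun θ _ hg =>
    haveI := hP θ; hg.integrable
  have heqOn : EqOn (fun μ => ∫ y, d y ∂P μ) (fun μ => ∫ y, d' y ∂P μ) S :=
    eqOn_of_forall_mul_le_mul hPI hweak
  have hBC : BoundedlyCompleteOn (fun θ => P (m θ)) (m ⁻¹' S) := hBC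
  have hdiff : ∀ θ, (fun y => d' y - d y) =ᵐ[P (m θ)] 0 :=
    hBC.ae_eq_zero_of_integral_eq_zero hAC (hd'.1.sub hd.1) ⟨1, hd'.abs_sub_le_one hd⟩
      fun θ hθ => by
        rw [integral_sub (hint θ hd') (hint θ hd)]
        exact sub_eq_zero.2 (heqOn hθ).symm
  have heq : ∫ y, d y ∂P (m θ₀) = ∫ y, d' y ∂P (m θ₀) :=
    integral_congr_ae <| (hdiff θ₀).mono fun y hy => (sub_eq_zero.1 hy).symm
  exact hstrict.ne (by rw [heq])

/-- **Theorem (general admissibility under bounded completeness).**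
Let `P μ` be a statistical model on a measurable space `Y` indexed by the reduced-form
parameter `μ = m(θ)`. Under nontrivial partial identification (PI), bounded completeness
of the family `{P (m θ) : m θ ∈ S}` (A1), and the absolute-continuity condition (A2),
every decision rule `d : Y → [0,1]` is welfare-admissible. -/
theorem general_admissibility
    (n : ℕ) (Y : Type*) [MeasurableSpace Y] (Θ : Type*) [Nonempty Θ]
    (U : Θ → ℝ) (m : Θ → Fin n → ℝ)
    (P : (Fin n → ℝ) → Measure Y) (hP : ∀ θ : Θ, IsProbabilityMeasure (P (m θ)))
    (S : Set (Fin n → ℝ)) (hSne : S.Nonempty) (hSopen : IsOpen S)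
    -- (PI): nontrivial partial identification on `S`
    (hPI : ∀ μ ∈ S, (∃ θ, m θ = μ ∧ U θ < 0) ∧ (∃ θ, m θ = μ ∧ 0 < U θ))
    -- (A1): bounded completeness of the subfamily indexed by `m⁻¹(S)`
    (hBC : ∀ f : Y → ℝ, Measurable f → (∃ C : ℝ, ∀ y, |f y| ≤ C) →
      (∀ θ : Θ, m θ ∈ S → ∫ y, f y ∂ P (m θ) = 0) →
      ∀ θ : Θ, m θ ∈ S → f =ᵐ[P (m θ)] 0)
    -- (A2): common null sets extend from the subfamily to the whole family
    (hAC : ∀ E : Set Y, MeasurableSet E →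
      (∀ θ : Θ, m θ ∈ S → P (m θ) E = 0) → ∀ θ : Θ, P (m θ) E = 0)
    (d : Y → ℝ) (hd : Measurable d ∧ ∀ y, d y ∈ Set.Icc (0 : ℝ) 1) :
    ¬ ∃ d' : Y → ℝ, (Measurable d' ∧ ∀ y, d' y ∈ Set.Icc (0 : ℝ) 1) ∧
      (∀ θ : Θ, U θ * ∫ y, d y ∂ P (m θ) ≤ U θ * ∫ y, d' y ∂ P (m θ)) ∧
      (∃ θ : Θ, U θ * ∫ y, d y ∂ P (m θ) < U θ * ∫ y, d' y ∂ P (m θ)) :=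
  general_admissibility_general n Y Θ U m P hP S hPI hBC hAC d hd
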